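/- arXiv:math/0402115 — 7 statements merged into one kernel-verified Lean document; each statement's English description precedes it below -/
import Mathlib

section
/- Let P ⊂ ℝ^N be a polytope with vertex set V. For each vertex v, the normal cone C(v) = { u : ∀ x ∈ P, u·(x-v) ≤ 0 } equals the recession cone of the Voronoi region R_v of v with respect to the vertex set V; i.e., C(v) = { u : ∀ t ≥ 0, ∀ x ∈ R_v, x + t·u ∈ R_v }. -/
open scoped RealInnerProductSpace

theorem stmt_4 (N M : ℕ) (v : Fin M → EuclideanSpace ℝ (Fin N)) (i : Fin M) :
    {u : EuclideanSpace ℝ (Fin N) |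
        ∀ x ∈ convexHull ℝ (Set.range v), ⟪u, x - v i⟫ ≤ 0} =
      {u : EuclideanSpace ℝ (Fin N) |
        ∀ t : ℝ, 0 ≤ t →
          ∀ x ∈ {y : EuclideanSpace ℝ (Fin N) | ∀ j, ‖y - v i‖ ≤ ‖y - v j‖},
            x + t • u ∈ {y : EuclideanSpace ℝ (Fin N) | ∀ j, ‖y - v i‖ ≤ ‖y - v j‖}} := by
  ext u
  simp only [Set.mem_setOf_eq]
  constructor
  · intro hu t ht x hx j
    have hj : ⟪u, v j - v i⟫ ≤ 0 :=
      hu (v j) (subset_convexHull ℝ _ ⟨j, rfl⟩)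
    have e1 : ‖x + t • u - v i‖ ^ 2
        = ‖x - v i‖ ^ 2 + 2 * (t * ⟪u, x - v i⟫) + t ^ 2 * ‖u‖ ^ 2 := by
      have : x + t • u - v i = (x - v i) + t • u := by abel
      rw [this, norm_add_sq_real, real_inner_smul_right, real_inner_comm,
        norm_smul, mul_pow]
      simp [abs_of_nonneg ht]
    have e2 : ‖x + t • u - v j‖ ^ 2
        = ‖x - v j‖ ^ 2 + 2 * (t * ⟪u, x - v j⟫) + t ^ 2 * ‖u‖ ^ 2 := by
      have : x + t • u - v j = (x - v j) + t • u := by abel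
      rw [this, norm_add_sq_real, real_inner_smul_right, real_inner_comm,
        norm_smul, mul_pow]
      simp [abs_of_nonneg ht]
    have hd : ⟪u, x - v i⟫ - ⟪u, x - v j⟫ = ⟪u, v j - v i⟫ := by
      rw [← inner_sub_right]
      congr 1
      abel
    have hsq : ‖x + t • u - v i‖ ^ 2 ≤ ‖x + t • u - v j‖ ^ 2 := by
      have hxj := hx j
      nlinarith [norm_nonneg (x - v i), norm_nonneg (x - v j)]
    exact le_of_pow_le_pow_left₀ two_ne_zero (norm_nonneg _) hsq
  · intro hu x hx
    have hv : ∀ j, ⟪u, v j - v i⟫ ≤ 0 := by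
      intro j
      by_contra h
      push_neg at h
      set c : ℝ := ⟪u, v j - v i⟫ with hc
      set t : ℝ := (‖v i - v j‖ ^ 2 + 1) / (2 * c) with htdef
      have htpos : 0 ≤ t := by positivity
      have hvi : v i ∈ {y : EuclideanSpace ℝ (Fin N) | ∀ j, ‖y - v i‖ ≤ ‖y - v j‖} := by
        intro k
        simp
      have hk := hu t htpos (v i) hvi j
      have e1 : ‖v i + t • u - v i‖ ^ 2 = t ^ 2 * ‖u‖ ^ 2 := by
        have : v i + t • u - v i = t • u := by abel
        rw [this, norm_smul, mul_pow]
        simp [abs_of_nonneg htpos]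
      have e2 : ‖v i + t • u - v j‖ ^ 2
          = ‖v i - v j‖ ^ 2 + 2 * (t * ⟪u, v i - v j⟫) + t ^ 2 * ‖u‖ ^ 2 := by
        have : v i + t • u - v j = (v i - v j) + t • u := by abel
        rw [this, norm_add_sq_real, real_inner_smul_right, real_inner_comm,
          norm_smul, mul_pow]
        simp [abs_of_nonneg htpos]
      have hneg : ⟪u, v i - v j⟫ = -c := by
        rw [hc, ← inner_neg_right]
        congr 1
        abel
      have hsq : ‖v i + t • u - v i‖ ^ 2 ≤ ‖v i + t • u - v j‖ ^ 2 := by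
        have := hk
        nlinarith [norm_nonneg (v i + t • u - v i), norm_nonneg (v i + t • u - v j)]
      rw [e1, e2, hneg] at hsq
      have ht2 : 2 * c * t = ‖v i - v j‖ ^ 2 + 1 := by
        rw [htdef]
        field_simp
      nlinarith
    have hS : convexHull ℝ (Set.range v) ⊆ {y : EuclideanSpace ℝ (Fin N) | ⟪u, y⟫ ≤ ⟪u, v i⟫} := by
      apply convexHull_min
      · rintro _ ⟨j, rfl⟩
        have := hv j
        rw [inner_sub_right] at this
        simpa using this
      · have hlin : IsLinearMap ℝ (fun y : EuclideanSpace ℝ (Fin N) => ⟪u, y⟫) :=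
          ⟨fun a b => inner_add_right .., fun c a => real_inner_smul_right ..⟩
        exact convex_halfSpace_le hlin _
    have := hS hx
    rw [Set.mem_setOf_eq] at this
    rw [inner_sub_right]
    linarith
end

section
/- Let P ⊂ ℝ^N be a polytope with vertex set {v_1,...,v_M}, let v(x) denote a nearest vertex to x, and let C_1(v) denote the unit vectors in the normal cone of P at v. Then for every ε > 0 there exists D > 0 such that ‖x‖ > D implies d(x/‖x‖, C_1(v(x))) < ε. -/
open scoped RealInnerProductSpace

lemma key_lemma {E : Type*} [NormedAddCommGroup E] [InnerProductSpace ℝ E]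
    [FiniteDimensional ℝ E] {M : ℕ} (v : Fin M → E) (w : E) (ε : ℝ) (hε : 0 < ε) :
    ∃ δ > (0:ℝ), ∀ u : E, ‖u‖ = 1 → (∀ i, ⟪u, v i - w⟫ ≤ δ) →
      Metric.infDist u {u : E | ‖u‖ = 1 ∧
        ∀ y ∈ convexHull ℝ (Set.range v), ⟪u, y - w⟫ ≤ 0} < ε := by
  set S : Set E := {u : E | ‖u‖ = 1 ∧
      ∀ y ∈ convexHull ℝ (Set.range v), ⟪u, y - w⟫ ≤ 0} with hS
  by_contra h
  push_neg at h
  have hseq : ∀ n : ℕ, ∃ u : E, ‖u‖ = 1 ∧ (∀ i, ⟪u, v i - w⟫ ≤ 1/(n+1)) ∧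
      ε ≤ Metric.infDist u S := by
    intro n
    obtain ⟨u, hu1, hu2, hu3⟩ := h (1/(n+1)) (by positivity)
    exact ⟨u, hu1, hu2, hu3⟩
  set K : ℕ → Set E := fun n => {u : E | ‖u‖ = 1} ∩
      (⋂ i, {u : E | ⟪u, v i - w⟫ ≤ 1/(n+1)}) ∩ {u : E | ε ≤ Metric.infDist u S} with hK
  have hKclosed : ∀ n, IsClosed (K n) := by
    intro n
    refine IsClosed.inter (IsClosed.inter ?_ ?_) ?_
    · exact isClosed_eq continuous_norm continuous_const
    · exact isClosed_iInter fun i => isClosed_le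
        (Continuous.inner continuous_id continuous_const) continuous_const
    · exact isClosed_le continuous_const (Metric.continuous_infDist_pt S)
  have hKne : ∀ n, (K n).Nonempty := by
    intro n
    obtain ⟨u, hu1, hu2, hu3⟩ := hseq n
    exact ⟨u, ⟨⟨hu1, Set.mem_iInter.2 hu2⟩, hu3⟩⟩
  have hKsub : ∀ n, K (n+1) ⊆ K n := by
    intro n u hu
    refine ⟨⟨hu.1.1, ?_⟩, hu.2⟩
    rw [Set.mem_iInter]
    intro i
    have := Set.mem_iInter.1 hu.1.2 i
    have h1 : (1:ℝ)/(n+1+1) ≤ 1/(n+1) := by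
      apply div_le_div_of_nonneg_left one_pos.le (by positivity)
      push_cast; linarith
    calc ⟪u, v i - w⟫ ≤ 1/(↑(n+1)+1) := this
    _ ≤ 1/(n+1) := by push_cast; push_cast at h1; linarith
  have hKcompact : IsCompact (K 0) := by
    have hsub : K 0 ⊆ Metric.sphere (0:E) 1 := by
      intro u hu
      simpa [mem_sphere_zero_iff_norm] using hu.1.1
    exact (isCompact_sphere (0:E) 1).of_isClosed_subset (hKclosed 0) hsub
  obtain ⟨u, hu⟩ := IsCompact.nonempty_iInter_of_sequence_nonempty_isCompact_isClosed
      K hKsub hKne hKcompact hKclosed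
  have hmem : ∀ n, u ∈ K n := Set.mem_iInter.1 hu
  have hu1 : ‖u‖ = 1 := (hmem 0).1.1
  have hle : ∀ i, ⟪u, v i - w⟫ ≤ 0 := by
    intro i
    by_contra hpos
    push_neg at hpos
    obtain ⟨n, hn⟩ := exists_nat_one_div_lt hpos
    have h2 : ⟪u, v i - w⟫ ≤ 1/(n+1) := Set.mem_iInter.1 (hmem n).1.2 i
    linarith
  have huS : u ∈ S := by
    refine ⟨hu1, ?_⟩
    intro y hy
    have hconv : convexHull ℝ (Set.range v) ⊆ {y : E | ⟪u, y⟫ ≤ ⟪u, w⟫} := by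
      apply convexHull_min
      · rintro _ ⟨i, rfl⟩
        have := hle i
        rw [inner_sub_right] at this
        show ⟪u, v i⟫ ≤ ⟪u, w⟫
        linarith
      · exact convex_halfSpace_le (innerSL ℝ u).toLinearMap.isLinear _
    have h2 : ⟪u, y⟫ ≤ ⟪u, w⟫ := hconv hy
    rw [inner_sub_right]
    linarith
  have h0 : Metric.infDist u S = 0 := Metric.infDist_zero_of_mem huS
  have h2 : ε ≤ Metric.infDist u S := (hmem 0).2
  rw [h0] at h2
  linarith

theorem stmt_5 (N M : ℕ) (hM : 0 < M) (v : Fin M → EuclideanSpace ℝ (Fin N))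
    (vx : EuclideanSpace ℝ (Fin N) → Fin M)
    (hvx : ∀ x j, ‖x - v (vx x)‖ ≤ ‖x - v j‖)
    (ε : ℝ) (hε : 0 < ε) :
    ∃ D > (0 : ℝ), ∀ x : EuclideanSpace ℝ (Fin N), D < ‖x‖ →
      Metric.infDist (‖x‖⁻¹ • x)
        {u : EuclideanSpace ℝ (Fin N) | ‖u‖ = 1 ∧
          ∀ y ∈ convexHull ℝ (Set.range v), ⟪u, y - v (vx x)⟫ ≤ 0} < ε := by
  haveI : Nonempty (Fin M) := ⟨⟨0, hM⟩⟩
  have H : ∀ j : Fin M, ∃ δ > (0:ℝ), ∀ u : EuclideanSpace ℝ (Fin N), ‖u‖ = 1 →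
      (∀ i, ⟪u, v i - v j⟫ ≤ δ) →
      Metric.infDist u {u : EuclideanSpace ℝ (Fin N) | ‖u‖ = 1 ∧
        ∀ y ∈ convexHull ℝ (Set.range v), ⟪u, y - v j⟫ ≤ 0} < ε :=
    fun j => key_lemma v (v j) ε hε
  choose δf hδf hf using H
  set δ : ℝ := Finset.univ.inf' Finset.univ_nonempty δf with hδdef
  have hδpos : 0 < δ := by
    rw [hδdef, Finset.lt_inf'_iff]
    exact fun j _ => hδf j
  set C : ℝ := Finset.univ.sup' Finset.univ_nonempty (fun i => ‖v i‖^2) with hCdef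
  have hC : ∀ i, ‖v i‖^2 ≤ C := fun i =>
    Finset.le_sup' (fun i => ‖v i‖^2) (Finset.mem_univ i)
  have hC0 : 0 ≤ C := le_trans (sq_nonneg _) (hC ⟨0, hM⟩)
  refine ⟨C/(2*δ) + 1, by positivity, ?_⟩
  intro x hx
  have hxpos : 0 < ‖x‖ := lt_of_le_of_lt (by positivity) hx
  have hu1 : ‖(‖x‖⁻¹ • x)‖ = 1 := by
    rw [norm_smul, norm_inv, norm_norm, inv_mul_cancel₀ hxpos.ne']
  have hδD : C/2 + δ ≤ δ * ‖x‖ := by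
    have h1 : δ * (C/(2*δ) + 1) ≤ δ * ‖x‖ := by
      apply mul_le_mul_of_nonneg_left hx.le hδpos.le
    have h2 : δ * (C/(2*δ) + 1) = C/2 + δ := by field_simp
    linarith
  have hkey : ∀ i, ⟪(‖x‖⁻¹ • x), v i - v (vx x)⟫ ≤ δ := by
    intro i
    have e1 : ‖x - v (vx x)‖^2 ≤ ‖x - v i‖^2 :=
      pow_le_pow_left₀ (norm_nonneg _) (hvx x i) 2
    rw [@norm_sub_sq_real, @norm_sub_sq_real] at e1
    have e2 : ⟪x, v i - v (vx x)⟫ ≤ C/2 := by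
      rw [inner_sub_right]
      have := hC i
      have h3 : 0 ≤ ‖v (vx x)‖^2 := sq_nonneg _
      nlinarith
    rw [real_inner_smul_left]
    rw [inv_mul_le_iff₀ hxpos, mul_comm]
    calc ⟪x, v i - v (vx x)⟫ ≤ C/2 := e2
    _ ≤ δ * ‖x‖ - δ := by linarith
    _ ≤ δ * ‖x‖ := by linarith
  exact hf (vx x) (‖x‖⁻¹ • x) hu1
    (fun i => le_trans (hkey i) (Finset.inf'_le δf (Finset.mem_univ _)))
end

section
/- Let x and ω, ω' be unit vectors in ℝ^N, let θ (resp. θ') be the angle between x and ω (resp. x and ω'), and suppose the chord-length difference satisfies ‖ω - x‖ - ‖ω' - x‖ > ε/2 for some ε ∈ (0,1) with θ' + ε/2 ≤ π. Then θ - θ' > ε/2 (arc-length differences exceed chord-length differences). -/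
open InnerProductGeometry Real Set

/- By the law of cosines the chord between unit vectors at angle `θ` has length
`2 sin (θ / 2)`, and `sin` is 1-Lipschitz and increasing on `[0, π / 2]`, so a positive
difference of half-angle sines bounds the difference of half-angles from below. -/

theorem norm_sub_eq_two_mul_sin_half_angle {V : Type*} [NormedAddCommGroup V]
    [InnerProductSpace ℝ V] {x y : V} (hx : ‖x‖ = 1) (hy : ‖y‖ = 1) :
    ‖y - x‖ = 2 * sin (angle x y / 2) := by
  have hsin : 0 ≤ sin (angle x y / 2) :=
    sin_nonneg_of_nonneg_of_le_pi (by linarith [angle_nonneg x y])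
      (by linarith [angle_le_pi x y, pi_pos])
  have hcos : cos (angle x y) = 1 - 2 * sin (angle x y / 2) ^ 2 := by
    have hdouble := cos_two_mul' (angle x y / 2)
    rw [mul_div_cancel₀ _ two_ne_zero] at hdouble
    linear_combination hdouble + cos_sq_add_sin_sq (angle x y / 2)
  have hsq : ‖y - x‖ * ‖y - x‖ = 2 * sin (angle x y / 2) * (2 * sin (angle x y / 2)) := by
    rw [norm_sub_rev, norm_sub_sq_eq_norm_sq_add_norm_sq_sub_two_mul_norm_mul_norm_mul_cos_angle,
      hx, hy, hcos]
    ring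
  exact (mul_self_inj (norm_nonneg _) (by positivity)).1 hsq

theorem sin_sub_sin_le_sub_of_sin_le {a b : ℝ} (ha : a ∈ Icc (-(π / 2)) (π / 2))
    (hb : b ∈ Icc (-(π / 2)) (π / 2)) (h : sin b ≤ sin a) : sin a - sin b ≤ a - b := by
  have hba : b ≤ a := (strictMonoOn_sin.le_iff_le hb ha).1 h
  have := lipschitzWith_sin.dist_le_mul a b
  rw [NNReal.coe_one, one_mul, Real.dist_eq, Real.dist_eq, abs_of_nonneg (sub_nonneg.2 h),
    abs_of_nonneg (sub_nonneg.2 hba)] at this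
  exact this

theorem stmt_8_general (N : ℕ) (x ω ω' : EuclideanSpace ℝ (Fin N))
    (hx : ‖x‖ = 1) (hω : ‖ω‖ = 1) (hω' : ‖ω'‖ = 1)
    (ε : ℝ) (hε : 0 < ε)
    (hchord : ‖ω - x‖ - ‖ω' - x‖ > ε / 2) :
    InnerProductGeometry.angle x ω - InnerProductGeometry.angle x ω' > ε / 2 := by
  rw [norm_sub_eq_two_mul_sin_half_angle hx hω, norm_sub_eq_two_mul_sin_half_angle hx hω']
    at hchord
  have half_angle_mem : ∀ y, angle x y / 2 ∈ Icc (-(π / 2)) (π / 2) := fun y =>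
    ⟨by linarith [angle_nonneg x y, pi_pos], by linarith [angle_le_pi x y]⟩
  have hsin_sub := sin_sub_sin_le_sub_of_sin_le (half_angle_mem ω) (half_angle_mem ω') (by linarith)
  linarith

theorem stmt_8 (N : ℕ) (x ω ω' : EuclideanSpace ℝ (Fin N))
    (hx : ‖x‖ = 1) (hω : ‖ω‖ = 1) (hω' : ‖ω'‖ = 1)
    (ε : ℝ) (hε : 0 < ε) (hε1 : ε < 1)
    (hθ' : InnerProductGeometry.angle x ω' + ε / 2 ≤ Real.pi)
    (hchord : ‖ω - x‖ - ‖ω' - x‖ > ε / 2) :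
    InnerProductGeometry.angle x ω - InnerProductGeometry.angle x ω' > ε / 2 :=
  stmt_8_general N x ω ω' hx hω hω' ε hε hchord
end

section
/- Let S be a sphere of radius r centered at c in ℝ^N, let V_α ∋ c be an affine subspace through c, let z ∈ S_α = S ∩ V_α, and for ε < r let F_α(z,ε) = (ℝ₊·(z-c) × V_α^⊥(ε)) ∩ S be the (α,ε)-spherical cap with top at z. Then F_α(z,ε) ⊆ { x ∈ S : ‖x - z‖ ≤ √2 · ε }. -/
/-!
Write `x - c = t • u + w` with `u = z - c` and `w ⟂ u`. Pythagoras on the sphere gives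
`‖w‖² = r² (1 - t²)`, while `‖x - z‖² = (t - 1)² r² + ‖w‖² = 2 r² (1 - t)`; for `0 ≤ t ≤ 1`
the latter is at most `2 r² (1 - t) (1 + t) = 2 ‖w‖²`.
-/

open scoped RealInnerProductSpace

section

variable {E : Type*} [NormedAddCommGroup E] [InnerProductSpace ℝ E] {u w : E}

lemma norm_smul_add_sq_of_inner_eq_zero (h : ⟪u, w⟫ = 0) (s : ℝ) :
    ‖s • u + w‖ ^ 2 = s ^ 2 * ‖u‖ ^ 2 + ‖w‖ ^ 2 := by
  rw [norm_add_sq_real, real_inner_smul_left, h, norm_smul, mul_pow, Real.norm_eq_abs, sq_abs]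
  ring

lemma norm_smul_add_sub_sq_le_of_inner_eq_zero (h : ⟪u, w⟫ = 0) {t : ℝ} (ht : 0 ≤ t)
    (hnorm : ‖t • u + w‖ = ‖u‖) : ‖t • u + w - u‖ ^ 2 ≤ 2 * ‖w‖ ^ 2 := by
  have hw : ‖w‖ ^ 2 = ‖u‖ ^ 2 * (1 - t) * (1 + t) := by
    have := norm_smul_add_sq_of_inner_eq_zero h t
    rw [hnorm] at this
    linarith
  have hsub : t • u + w - u = (t - 1) • u + w := by
    rw [sub_smul, one_smul]; abel
  have hnonneg : 0 ≤ ‖u‖ ^ 2 * (1 - t) :=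
    nonneg_of_mul_nonneg_left (hw ▸ sq_nonneg ‖w‖) (by linarith)
  rw [hsub, norm_smul_add_sq_of_inner_eq_zero h, hw]
  nlinarith [mul_nonneg hnonneg ht]

lemma norm_smul_add_sub_le_of_inner_eq_zero (h : ⟪u, w⟫ = 0) {t : ℝ} (ht : 0 ≤ t)
    (hnorm : ‖t • u + w‖ = ‖u‖) : ‖t • u + w - u‖ ≤ Real.sqrt 2 * ‖w‖ := by
  rw [← Real.sqrt_sq (norm_nonneg w), ← Real.sqrt_mul zero_le_two]
  exact Real.le_sqrt_of_sq_le (norm_smul_add_sub_sq_le_of_inner_eq_zero h ht hnorm)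

end

theorem stmt_11_general (N : ℕ) (c : EuclideanSpace ℝ (Fin N)) (r : ℝ)
    (V : Submodule ℝ (EuclideanSpace ℝ (Fin N)))
    (z : EuclideanSpace ℝ (Fin N)) (hzS : ‖z - c‖ = r) (hzV : z - c ∈ V)
    (ε : ℝ) :
    {x : EuclideanSpace ℝ (Fin N) | ‖x - c‖ = r ∧
        ∃ t : ℝ, 0 ≤ t ∧ ∃ w ∈ Vᗮ, ‖w‖ < ε ∧ x = c + t • (z - c) + w} ⊆
      {x : EuclideanSpace ℝ (Fin N) | ‖x - c‖ = r ∧ ‖x - z‖ ≤ Real.sqrt 2 * ε} := by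
  rintro x ⟨hx, t, ht, w, hwV, hwε, rfl⟩
  refine ⟨hx, ?_⟩
  have horth : ⟪z - c, w⟫ = 0 := (Submodule.mem_orthogonal V w).mp hwV (z - c) hzV
  have hnorm : ‖t • (z - c) + w‖ = ‖z - c‖ := by
    rw [hzS, ← hx]; congr 1; abel
  calc ‖c + t • (z - c) + w - z‖ = ‖t • (z - c) + w - (z - c)‖ := by congr 1; abel
    _ ≤ Real.sqrt 2 * ‖w‖ := norm_smul_add_sub_le_of_inner_eq_zero horth ht hnorm
    _ ≤ Real.sqrt 2 * ε := by gcongr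

theorem stmt_11 (N : ℕ) (c : EuclideanSpace ℝ (Fin N)) (r : ℝ) (hr : 0 < r)
    (V : Submodule ℝ (EuclideanSpace ℝ (Fin N)))
    (z : EuclideanSpace ℝ (Fin N)) (hzS : ‖z - c‖ = r) (hzV : z - c ∈ V)
    (ε : ℝ) (hε : 0 < ε) (hεr : ε < r) :
    {x : EuclideanSpace ℝ (Fin N) | ‖x - c‖ = r ∧
        ∃ t : ℝ, 0 ≤ t ∧ ∃ w ∈ Vᗮ, ‖w‖ < ε ∧ x = c + t • (z - c) + w} ⊆
      {x : EuclideanSpace ℝ (Fin N) | ‖x - c‖ = r ∧ ‖x - z‖ ≤ Real.sqrt 2 * ε} :=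
  stmt_11_general N c r V z hzS hzV ε
end

section
/- With notation as in the construction of spherical caps on a sphere S(c,r), for z ∈ S_α = S ∩ V_α and ε < r, every point of z's relative boundary ∂_rel F_α(z,ε) = (ℝ₊·(z-c) × (∂U_ε(c) ∩ V_α^⊥)) ∩ S is at distance strictly greater than ε from z: d(z, ∂_rel F_α(z,ε)) > ε. -/
open scoped RealInnerProductSpace

theorem stmt_12 (N : ℕ) (c : EuclideanSpace ℝ (Fin N)) (r : ℝ) (hr : 0 < r)
    (V : Submodule ℝ (EuclideanSpace ℝ (Fin N)))
    (z : EuclideanSpace ℝ (Fin N)) (hzS : ‖z - c‖ = r) (hzV : z - c ∈ V)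
    (ε : ℝ) (hε : 0 < ε) (hεr : ε < r) :
    ∀ x ∈ {x : EuclideanSpace ℝ (Fin N) | ‖x - c‖ = r ∧
        ∃ t : ℝ, 0 ≤ t ∧ ∃ w ∈ Vᗮ, ‖w‖ = ε ∧ x = c + t • (z - c) + w},
      ε < dist z x := by
  rintro x ⟨hxS, t, ht, w, hwV, hwε, rfl⟩
  have horth : ⟪z - c, w⟫ = 0 :=
    (Submodule.mem_orthogonal V w).mp hwV (z - c) hzV
  -- ‖x - c‖² = t² r² + ε²
  have h1 : ‖c + t • (z - c) + w - c‖ ^ 2 = t ^ 2 * r ^ 2 + ε ^ 2 := by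
    have : c + t • (z - c) + w - c = t • (z - c) + w := by abel
    rw [this, norm_add_sq_real]
    have hi : ⟪t • (z - c), w⟫ = 0 := by
      rw [real_inner_smul_left, horth]; ring
    rw [hi, norm_smul, hzS, hwε, mul_pow, Real.norm_eq_abs, sq_abs]
    ring
  have ht1 : t < 1 := by
    have h2 : t ^ 2 * r ^ 2 + ε ^ 2 = r ^ 2 := by rw [← h1, hxS]
    have hsq : t ^ 2 < 1 := by nlinarith [pow_pos hr 2, pow_pos hε 2]
    nlinarith
  have h3 : ‖z - (c + t • (z - c) + w)‖ ^ 2 = (1 - t) ^ 2 * r ^ 2 + ε ^ 2 := by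
    have : z - (c + t • (z - c) + w) = (1 - t) • (z - c) + (-w) := by
      rw [sub_smul, one_smul]; abel
    rw [this, norm_add_sq_real]
    have hi : ⟪(1 - t) • (z - c), -w⟫ = 0 := by
      rw [inner_neg_right, real_inner_smul_left, horth]; ring
    rw [hi, norm_smul, norm_neg, hzS, hwε, mul_pow, Real.norm_eq_abs, sq_abs]
    ring
  have hd : dist z (c + t • (z - c) + w) = ‖z - (c + t • (z - c) + w)‖ :=
    dist_eq_norm _ _
  rw [hd]
  nlinarith [norm_nonneg (z - (c + t • (z - c) + w)),
    mul_pos (pow_pos (sub_pos.2 ht1) 2) (pow_pos hr 2)]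
end

section
/- The relative boundary of the spherical cap F_α(z,ε) on the sphere S(c,r) equals the intersection of the sphere S(c + (√(r²-ε²)/r)(z-c), ε) with the great sphere S_α^⊥(z) = (ℝ·(z-c) × V_α^⊥) ∩ S; in particular it is a Euclidean sphere of radius ε centered at c + (√(r²-ε²)/r)(z-c). -/
open scoped RealInnerProductSpace

theorem stmt_13 (N : ℕ) (c : EuclideanSpace ℝ (Fin N)) (r : ℝ) (hr : 0 < r)
    (V : Submodule ℝ (EuclideanSpace ℝ (Fin N)))
    (z : EuclideanSpace ℝ (Fin N)) (hzS : ‖z - c‖ = r) (hzV : z - c ∈ V)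
    (ε : ℝ) (hε : 0 < ε) (hεr : ε < r) :
    {x : EuclideanSpace ℝ (Fin N) | ‖x - c‖ = r ∧
        ∃ t : ℝ, 0 ≤ t ∧ ∃ w ∈ Vᗮ, ‖w‖ = ε ∧ x = c + t • (z - c) + w} =
      Metric.sphere (c + (Real.sqrt (r ^ 2 - ε ^ 2) / r) • (z - c)) ε ∩
        {x : EuclideanSpace ℝ (Fin N) | ‖x - c‖ = r ∧
          ∃ t : ℝ, ∃ w ∈ Vᗮ, x = c + t • (z - c) + w} := by
  set u := z - c with hu_def
  set t₀ : ℝ := Real.sqrt (r ^ 2 - ε ^ 2) / r with ht₀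
  have hr2 : (0:ℝ) ≤ r ^ 2 - ε ^ 2 := by nlinarith
  have ht₀sq : t₀ ^ 2 * r ^ 2 = r ^ 2 - ε ^ 2 := by
    rw [ht₀, div_pow, Real.sq_sqrt hr2]
    field_simp
  have ht₀pos : 0 < t₀ :=
    div_pos (Real.sqrt_pos.mpr (by nlinarith)) hr
  have key : ∀ (a : ℝ) (w : EuclideanSpace ℝ (Fin N)), w ∈ Vᗮ →
      ‖a • u + w‖ ^ 2 = a ^ 2 * r ^ 2 + ‖w‖ ^ 2 := by
    intro a w hw
    have h0 : ⟪a • u, w⟫ = 0 := by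
      rw [real_inner_smul_left, Submodule.inner_right_of_mem_orthogonal hzV hw, mul_zero]
    rw [norm_add_sq_real, h0, norm_smul]
    simp [hzS, mul_pow, sq_abs]
  ext x
  simp only [Set.mem_setOf_eq, Set.mem_inter_iff, Metric.mem_sphere, dist_eq_norm]
  constructor
  · rintro ⟨hxr, t, ht, w, hw, hwε, hx⟩
    have hxc : x - c = t • u + w := by rw [hx]; abel
    have hn : t ^ 2 * r ^ 2 + ε ^ 2 = r ^ 2 := by
      have := key t w hw
      rw [← hxc, hxr, hwε] at this
      linarith
    have ht2 : t ^ 2 = t₀ ^ 2 :=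
      mul_right_cancel₀ (by positivity : (r:ℝ) ^ 2 ≠ 0) (by linarith)
    have hteq : t = t₀ := by
      calc t = Real.sqrt (t ^ 2) := (Real.sqrt_sq ht).symm
        _ = Real.sqrt (t₀ ^ 2) := by rw [ht2]
        _ = t₀ := Real.sqrt_sq ht₀pos.le
    refine ⟨?_, hxr, t, w, hw, hx⟩
    have hd : x - (c + t₀ • u) = w := by rw [hx, hteq]; abel
    rw [hd, hwε]
  · rintro ⟨hsph, hxr, t, w, hw, hx⟩
    have hxc : x - c = t • u + w := by rw [hx]; abel
    have hd : x - (c + t₀ • u) = (t - t₀) • u + w := by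
      rw [hx, sub_smul]; abel
    have h1 : t ^ 2 * r ^ 2 + ‖w‖ ^ 2 = r ^ 2 := by
      have := key t w hw; rw [← hxc, hxr] at this; linarith
    have h2 : (t - t₀) ^ 2 * r ^ 2 + ‖w‖ ^ 2 = ε ^ 2 := by
      have := key (t - t₀) w hw; rw [← hd, hsph] at this; linarith
    have hlin : 2 * t₀ * r ^ 2 * (t - t₀) = 0 := by
      linear_combination h1 - h2 - ht₀sq
    have hteq : t = t₀ := by
      have hne : 2 * t₀ * r ^ 2 ≠ 0 := by positivity
      have := (mul_eq_zero.mp hlin).resolve_left hne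
      linarith
    have hsq : ‖w‖ ^ 2 = ε ^ 2 := by
      rw [hteq] at h2; simpa using h2
    have hwε : ‖w‖ = ε := by
      calc ‖w‖ = Real.sqrt (‖w‖ ^ 2) := (Real.sqrt_sq (norm_nonneg w)).symm
        _ = Real.sqrt (ε ^ 2) := by rw [hsq]
        _ = ε := Real.sqrt_sq hε.le
    refine ⟨hxr, t, ?_, w, hw, hwε, hx⟩
    rw [hteq]; exact ht₀pos.le
end

section
/- Let S = S(c,r), let V_{α'} ⊆ V_α be affine subspaces through c, let x ∈ S_α = S ∩ V_α and z ∈ S_{α'} = S ∩ V_{α'}, and suppose v lies on the relative boundaries of both caps F_α(x,δ) and F_{α'}(z,μ) (0 < δ, μ < r). Then r² - μ² = (r² - δ²)·((x-c)·(z-c)/r²)². -/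
open scoped RealInnerProductSpace

theorem stmt_14 (N : ℕ) (c : EuclideanSpace ℝ (Fin N)) (r : ℝ) (hr : 0 < r)
    (V' V : Submodule ℝ (EuclideanSpace ℝ (Fin N))) (hVV : V' ≤ V)
    (x z : EuclideanSpace ℝ (Fin N))
    (hxS : ‖x - c‖ = r) (hxV : x - c ∈ V)
    (hzS : ‖z - c‖ = r) (hzV : z - c ∈ V')
    (δ μ : ℝ) (hδ : 0 < δ) (hδr : δ < r) (hμ : 0 < μ) (hμr : μ < r)
    (v : EuclideanSpace ℝ (Fin N))
    (hv1 : ‖v - c‖ = r ∧ ∃ t : ℝ, 0 ≤ t ∧ ∃ w ∈ Vᗮ, ‖w‖ = δ ∧ v = c + t • (x - c) + w)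
    (hv2 : ‖v - c‖ = r ∧ ∃ t : ℝ, 0 ≤ t ∧ ∃ w ∈ V'ᗮ, ‖w‖ = μ ∧ v = c + t • (z - c) + w) :
    r ^ 2 - μ ^ 2 = (r ^ 2 - δ ^ 2) * (⟪x - c, z - c⟫ / r ^ 2) ^ 2 := by
  obtain ⟨hvS, t, ht, w, hwV, hwn, hveq⟩ := hv1
  obtain ⟨-, s, hs, u, huV, hun, hveq'⟩ := hv2
  have hzV' : z - c ∈ V := hVV hzV
  have hvc : v - c = t • (x - c) + w := by rw [hveq]; abel
  have hvc' : v - c = s • (z - c) + u := by rw [hveq']; abel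
  have hxw : ⟪x - c, w⟫ = 0 := (Submodule.mem_orthogonal V w).mp hwV _ hxV
  have hzw : ⟪z - c, w⟫ = 0 := (Submodule.mem_orthogonal V w).mp hwV _ hzV'
  have hzu : ⟪z - c, u⟫ = 0 := (Submodule.mem_orthogonal V' u).mp huV _ hzV
  have hwz : ⟪w, z - c⟫ = 0 := by rw [real_inner_comm]; exact hzw
  have huz : ⟪u, z - c⟫ = 0 := by rw [real_inner_comm]; exact hzu
  -- norm equation 1
  have h1 : t ^ 2 * r ^ 2 + δ ^ 2 = r ^ 2 := by
    have := congrArg (fun y => ‖y‖ ^ 2) hvc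
    simp only [hvS] at this
    rw [norm_add_sq_real, real_inner_smul_left, hxw, norm_smul, mul_pow] at this
    simp only [Real.norm_eq_abs, sq_abs, hxS, hwn] at this
    linarith
  have h2 : s ^ 2 * r ^ 2 + μ ^ 2 = r ^ 2 := by
    have := congrArg (fun y => ‖y‖ ^ 2) hvc'
    simp only [hvS] at this
    rw [norm_add_sq_real, real_inner_smul_left, hzu, norm_smul, mul_pow] at this
    simp only [Real.norm_eq_abs, sq_abs, hzS, hun] at this
    linarith
  -- inner product equation
  have h3 : s * r ^ 2 = t * ⟪x - c, z - c⟫ := by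
    have e1 : ⟪v - c, z - c⟫ = t * ⟪x - c, z - c⟫ := by
      rw [hvc, inner_add_left, real_inner_smul_left, hwz]
      ring
    have e2 : ⟪v - c, z - c⟫ = s * r ^ 2 := by
      rw [hvc', inner_add_left, real_inner_smul_left, huz,
        real_inner_self_eq_norm_sq, hzS]
      ring
    rw [← e1, e2]
  have hr2 : r ^ 2 ≠ 0 := by positivity
  set k := ⟪x - c, z - c⟫ with hk
  have h4 : s ^ 2 * r ^ 4 = t ^ 2 * k ^ 2 := by linear_combination (s * r ^ 2 + t * k) * h3
  field_simp
  linear_combination k ^ 2 * h1 - r ^ 4 * h2 + r ^ 2 * h4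
end
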